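/- arXiv:0811.4632 — 2 statements merged into one kernel-verified Lean document; each statement's English description precedes it below -/
import Mathlib

section
/- Let 𝒜 be a Grothendieck abelian category with generating set of objects I. An object E of the unbounded derived category D(𝒜) is the zero object if and only if every map A[j] → E in D(𝒜) is zero for all A ∈ I and all j ∈ ℤ. -/
/-!
An object of `D(𝒜)` vanishes once all its cohomology objects do. Represent `E` by a complex `K`;
a map `θ : A ⟶ Zⁿ(K)` from a generator is the same as a chain map `A[-n] ⟶ K`, which becomes zero
in `D(𝒜)` by hypothesis, so `θ` followed by `Zⁿ(K) ⟶ Hⁿ(K)` vanishes. As the generators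
separate morphisms, the epimorphism `Zⁿ(K) ⟶ Hⁿ(K)` is zero, hence `Hⁿ(K) = 0`.
-/

open CategoryTheory Limits

universe v u w

open ObjectProperty

lemma CategoryTheory.ObjectProperty.IsSeparating.mk_of_exists_epi_sigma {C : Type u}
    [Category.{v} C] [HasCoproducts.{w} C] (P : ObjectProperty C)
    (hP : ∀ X : C, ∃ (ι : Type w) (s : ι → C) (_ : ∀ i, P (s i)) (p : ∐ s ⟶ X), Epi p) :
    P.IsSeparating := by
  refine IsSeparating.mk_of_exists_epi.{w} fun X ↦ ?_
  obtain ⟨ι, s, hs, p, hp⟩ := hP X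
  exact ⟨ι, s, hs, _, coproductIsCoproduct s, p, hp⟩

namespace HomologicalComplex

variable {C : Type u} [Category.{v} C] [Abelian C] {ι : Type*} [DecidableEq ι]
  {c : ComplexShape ι} {K : HomologicalComplex C c} {j : ι} {A : C}

lemma singleObjHomologySelfIso_inv_homologyMap_mkHomFromSingle (θ : A ⟶ K.cycles j) :
    (singleObjHomologySelfIso c j A).inv ≫
        homologyMap (mkHomFromSingle (θ ≫ K.iCycles j) (by simp)) j =
      θ ≫ K.homologyπ j := by
  have hcycles : (singleObjCyclesSelfIso c j A).inv ≫
      cyclesMap (mkHomFromSingle (θ ≫ K.iCycles j) (by simp)) j = θ := by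
    simp [← cancel_mono (K.iCycles j)]
  rw [← singleObjCyclesSelfIso_inv_homologyπ, Category.assoc, homologyπ_naturality,
    ← Category.assoc, hcycles]

lemma isZero_homology_of_isSeparating {P : ObjectProperty C} (hP : P.IsSeparating)
    (h : ∀ A, P A → ∀ f : (single C c j).obj A ⟶ K, homologyMap f j = 0) :
    IsZero (K.homology j) := by
  refine IsZero.of_epi_eq_zero (K.homologyπ j) ((Preadditive.isSeparating_iff P).1 hP _ ?_)
  intro A hA θ
  rw [← singleObjHomologySelfIso_inv_homologyMap_mkHomFromSingle, h A hA, comp_zero]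

end HomologicalComplex

namespace DerivedCategory

variable {C : Type u} [Category.{v} C] [Abelian C] [HasDerivedCategory.{w} C]

lemma isZero_iff_forall_isZero_homology (X : DerivedCategory C) :
    IsZero X ↔ ∀ n, IsZero ((homologyFunctor C n).obj X) := by
  simpa only [isIsoZero_iff_source_target_isZero, and_self, Functor.map_zero] using
    isIso_iff C (0 : X ⟶ X)

lemma homologyMap_eq_zero_of_Q_map_eq_zero {K L : CochainComplex C ℤ} {f : K ⟶ L}
    (hf : Q.map f = 0) (n : ℤ) : HomologicalComplex.homologyMap f n = 0 := by
  have h := homologyFunctorFactors_hom_naturality f n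
  rw [hf, Functor.map_zero, zero_comp] at h
  exact (cancel_epi ((homologyFunctorFactors C n).app K).hom).1 (h.symm.trans comp_zero.symm)

lemma isZero_homologyFunctor_obj_of_isSeparating {P : ObjectProperty C} (hP : P.IsSeparating)
    (X : DerivedCategory C) (n : ℤ)
    (h : ∀ A, P A → ∀ g : (singleFunctor C n).obj A ⟶ X, g = 0) :
    IsZero ((homologyFunctor C n).obj X) := by
  have : (Q (C := C)).EssSurj :=
    Localization.essSurj _ (HomologicalComplex.quasiIso C (ComplexShape.up ℤ))
  let e := Q.objObjPreimageIso X
  refine IsZero.of_iso ?_ ((homologyFunctor C n).mapIso e.symm ≪≫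
    (homologyFunctorFactors C n).app _)
  refine HomologicalComplex.isZero_homology_of_isSeparating hP fun A hA f ↦ ?_
  refine homologyMap_eq_zero_of_Q_map_eq_zero ?_ n
  rw [← cancel_mono e.hom, zero_comp]
  exact h A hA _

lemma singleFunctor_hom_eq_zero_of_shift_singleFunctor_zero {A : C} {X : DerivedCategory C}
    (h : ∀ j : ℤ, ∀ g : ((singleFunctor C 0).obj A)⟦j⟧ ⟶ X, g = 0) (n : ℤ)
    (g : (singleFunctor C n).obj A ⟶ X) : g = 0 := by
  let e := ((singleFunctors C).shiftIso (-n) n 0 (by omega)).app A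
  rw [← cancel_epi e.hom, comp_zero]
  exact h _ _

end DerivedCategory

theorem statement_12_general (𝒜 : Type u) [Category.{v} 𝒜] [Abelian 𝒜]
    [HasColimits 𝒜] [HasDerivedCategory.{w} 𝒜]
    (I : Set 𝒜)
    (hI : ∀ E : 𝒜, ∃ (ι : Type v) (g : ι → 𝒜) (_ : ∀ x, g x ∈ I)
      (π : (∐ g) ⟶ E), Epi π) :
    ∀ E : DerivedCategory 𝒜,
      IsZero E ↔
        ∀ A ∈ I, ∀ j : ℤ,
          ∀ f : ((DerivedCategory.singleFunctor 𝒜 0).obj A)⟦j⟧ ⟶ E, f = 0 := by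
  have hsep : IsSeparating (· ∈ I) := IsSeparating.mk_of_exists_epi_sigma _ hI
  refine fun E ↦ ⟨fun hE A _ j f ↦ hE.eq_of_tgt f 0, fun h ↦ ?_⟩
  rw [DerivedCategory.isZero_iff_forall_isZero_homology]
  exact fun n ↦ DerivedCategory.isZero_homologyFunctor_obj_of_isSeparating hsep E n fun A hA ↦
    DerivedCategory.singleFunctor_hom_eq_zero_of_shift_singleFunctor_zero (h A hA) n

/-- Let `𝒜` be a Grothendieck abelian category (an abelian category with
set-indexed colimits, exact filtered colimits (AB5), and a generating set `I`
of objects: every object admits an epimorphism from a coproduct of objects of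
`I`).  An object `E` of the unbounded derived category `D(𝒜)` is the zero
object if and only if every map `A[j] ⟶ E` in `D(𝒜)` is zero, for all `A ∈ I`
and all `j ∈ ℤ`. -/
theorem statement_12 (𝒜 : Type u) [Category.{v} 𝒜] [Abelian 𝒜]
    [HasColimits 𝒜] [AB5 𝒜] [HasDerivedCategory.{w} 𝒜]
    (I : Set 𝒜)
    (hI : ∀ E : 𝒜, ∃ (ι : Type v) (g : ι → 𝒜) (_ : ∀ x, g x ∈ I)
      (π : (∐ g) ⟶ E), Epi π) :
    ∀ E : DerivedCategory 𝒜,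
      IsZero E ↔
        ∀ A ∈ I, ∀ j : ℤ,
          ∀ f : ((DerivedCategory.singleFunctor 𝒜 0).obj A)⟦j⟧ ⟶ E, f = 0 :=
  statement_12_general 𝒜 I hI
end

section
/- Let (E, *, η) be a category with duality: * : E^op → E a functor and η: 1 → ** a natural transformation with (η_A)* ∘ η_{A*} = 1_{A*} for all objects A. For a form functor (F, φ): (A, *, α) → (B, *, β) with duality compatibility φ: F∘* → *∘F satisfying (φ_A)* ∘ β_{FA} = φ_{A*} ∘ F(α_A), the assignment φ̂_A = φ_{A*} ∘ F(α_A) defines a symmetric form on F in the functor category Fun(A,B) equipped with the duality F^♯ = *F* and double-dual identification (η_F)_A = β_{F(A**)} ∘ F(α_A); conversely φ_A = F(α_A)* ∘ φ̂_{A*}. These two assignments are mutually inverse bijections between duality compatibility morphisms and symmetric forms on F. -/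
open CategoryTheory Opposite

universe v₁ v₂ u₁ u₂

/-- A category with duality: a functor `* : Cᵒᵖ ⥤ C` together with a double
dual identification `η : 1 ⟶ **` satisfying `1_{A*} = (η_A)* ∘ η_{A*}`. -/
structure DualityData (C : Type u₁) [Category.{v₁} C] where
  /-- the duality functor `X ↦ X*` -/
  D : Cᵒᵖ ⥤ C
  /-- the double dual identification `η_X : X ⟶ X**` -/
  η : ∀ X : C, X ⟶ D.obj (op (D.obj (op X)))
  η_natural : ∀ {X Y : C} (f : X ⟶ Y),
    f ≫ η Y = η X ≫ D.map (D.map f.op).op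
  coherence : ∀ X : C,
    η (D.obj (op X)) ≫ D.map (η X).op = 𝟙 (D.obj (op X))

variable {A : Type u₁} [Category.{v₁} A] {B : Type u₂} [Category.{v₂} B]

variable (dA : DualityData A) (dB : DualityData B) (F : A ⥤ B)

/-- A duality compatibility morphism for `F`: a natural family
`φ_X : F(X*) ⟶ (F X)*` satisfying `(φ_X)* ∘ β_{F X} = φ_{X*} ∘ F(η_X)`,
i.e. `(F, φ)` is a form functor. -/
def IsDualityCompat
    (φ : ∀ X : A, F.obj (dA.D.obj (op X)) ⟶ dB.D.obj (op (F.obj X))) : Prop :=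
  (∀ {X Y : A} (f : X ⟶ Y),
    F.map (dA.D.map f.op) ≫ φ X = φ Y ≫ dB.D.map (F.map f).op) ∧
  (∀ X : A,
    dB.η (F.obj X) ≫ dB.D.map (φ X).op =
      F.map (dA.η X) ≫ φ (dA.D.obj (op X)))

/-- A symmetric form on the functor `F` in the category `Fun(A,B)` with the
duality `F ↦ F^♯ = * ∘ F ∘ *` and double dual identification
`(η_F)_X = β_{F(X**)} ∘ F(α_X)`: a natural transformation `ψ : F ⟶ F^♯`
with `ψ^♯ ∘ η_F = ψ`. -/
def IsSymmetricFormOnFunctor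
    (ψ : ∀ X : A, F.obj X ⟶ dB.D.obj (op (F.obj (dA.D.obj (op X))))) : Prop :=
  (∀ {X Y : A} (f : X ⟶ Y),
    F.map f ≫ ψ Y = ψ X ≫ dB.D.map (F.map (dA.D.map f.op)).op) ∧
  (∀ X : A,
    (F.map (dA.η X) ≫
        dB.η (F.obj (dA.D.obj (op (dA.D.obj (op X)))))) ≫
      dB.D.map (ψ (dA.D.obj (op X))).op = ψ X)

/-- The symmetric form `φ̂` associated with a duality compatibility morphism
`φ` : `φ̂_X = φ_{X*} ∘ F(η_X)`. -/
def hatOf (φ : ∀ X : A, F.obj (dA.D.obj (op X)) ⟶ dB.D.obj (op (F.obj X))) :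
    ∀ X : A, F.obj X ⟶ dB.D.obj (op (F.obj (dA.D.obj (op X)))) :=
  fun X => F.map (dA.η X) ≫ φ (dA.D.obj (op X))

/-- The duality compatibility morphism associated with a symmetric form `ψ` on
`F` : `φ_X = F(η_X)* ∘ ψ_{X*}`. -/
def compatOf (ψ : ∀ X : A, F.obj X ⟶ dB.D.obj (op (F.obj (dA.D.obj (op X))))) :
    ∀ X : A, F.obj (dA.D.obj (op X)) ⟶ dB.D.obj (op (F.obj X)) :=
  fun X => ψ (dA.D.obj (op X)) ≫ dB.D.map (F.map (dA.η X)).op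

/-! Both round trips collapse by naturality followed by the coherence
`(η_X)* ∘ η_{X*} = 1` of the duality on `A`; the symmetry conditions on each side
then translate into each other through the naturality of `β`. -/

section FormFunctor

variable {dA dB F}

theorem compatOf_hatOf
    {φ : ∀ X : A, F.obj (dA.D.obj (op X)) ⟶ dB.D.obj (op (F.obj X))}
    (hφ : ∀ {X Y : A} (f : X ⟶ Y),
      F.map (dA.D.map f.op) ≫ φ X = φ Y ≫ dB.D.map (F.map f).op) :
    compatOf dA dB F (hatOf dA dB F φ) = φ := by
  funext X
  simp only [compatOf, hatOf, Category.assoc]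
  rw [← hφ (dA.η X), ← F.map_comp_assoc, dA.coherence X, F.map_id, Category.id_comp]

theorem hatOf_compatOf
    {ψ : ∀ X : A, F.obj X ⟶ dB.D.obj (op (F.obj (dA.D.obj (op X))))}
    (hψ : ∀ {X Y : A} (f : X ⟶ Y),
      F.map f ≫ ψ Y = ψ X ≫ dB.D.map (F.map (dA.D.map f.op)).op) :
    hatOf dA dB F (compatOf dA dB F ψ) = ψ := by
  funext X
  simp only [hatOf, compatOf]
  rw [reassoc_of% (hψ (dA.η X)), ← dB.D.map_comp, ← op_comp, ← F.map_comp,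
    dA.coherence X, F.map_id, op_id, dB.D.map_id, Category.comp_id]

theorem IsDualityCompat.isSymmetricFormOnFunctor_hatOf
    {φ : ∀ X : A, F.obj (dA.D.obj (op X)) ⟶ dB.D.obj (op (F.obj X))}
    (hφ : IsDualityCompat dA dB F φ) :
    IsSymmetricFormOnFunctor dA dB F (hatOf dA dB F φ) := by
  obtain ⟨hnat, hsym⟩ := hφ
  refine ⟨fun f => ?_, fun X => ?_⟩
  · simp only [hatOf, Category.assoc]
    rw [← F.map_comp_assoc, dA.η_natural f, F.map_comp_assoc, hnat (dA.D.map f.op)]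
  · have hround := congrFun (compatOf_hatOf hnat) (dA.D.obj (op X))
    simp only [compatOf, hatOf, Category.assoc] at hround
    simp only [hatOf, Category.assoc, op_comp, Functor.map_comp]
    rw [reassoc_of% (hsym (dA.D.obj (op (dA.D.obj (op X))))), hround]

theorem IsSymmetricFormOnFunctor.isDualityCompat_compatOf
    {ψ : ∀ X : A, F.obj X ⟶ dB.D.obj (op (F.obj (dA.D.obj (op X))))}
    (hψ : IsSymmetricFormOnFunctor dA dB F ψ) :
    IsDualityCompat dA dB F (compatOf dA dB F ψ) := by
  obtain ⟨hnat, hsym⟩ := hψ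
  refine ⟨fun f => ?_, fun X => ?_⟩
  · simp only [compatOf, Category.assoc]
    rw [reassoc_of% (hnat (dA.D.map f.op)), ← dB.D.map_comp, ← op_comp,
      ← F.map_comp, ← dA.η_natural f, F.map_comp, op_comp, dB.D.map_comp]
  · change _ = hatOf dA dB F (compatOf dA dB F ψ) X
    rw [hatOf_compatOf hnat, compatOf, op_comp, dB.D.map_comp,
      ← reassoc_of% (dB.η_natural (F.map (dA.η X))), ← Category.assoc, hsym X]

end FormFunctor

/-- The assignments `φ ↦ φ̂ = φ_{X*} ∘ F(η_X)` and
`ψ ↦ (X ↦ F(η_X)* ∘ ψ_{X*})` are mutually inverse bijections between duality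
compatibility morphisms on `F` (making `(F,φ)` a form functor) and symmetric
forms on `F` in the functor category with the duality `F^♯ = *F*`. -/
theorem statement_14 :
    (∀ φ, IsDualityCompat dA dB F φ →
      IsSymmetricFormOnFunctor dA dB F (hatOf dA dB F φ) ∧
        compatOf dA dB F (hatOf dA dB F φ) = φ) ∧
    (∀ ψ, IsSymmetricFormOnFunctor dA dB F ψ →
      IsDualityCompat dA dB F (compatOf dA dB F ψ) ∧
        hatOf dA dB F (compatOf dA dB F ψ) = ψ) :=
  ⟨fun _ hφ => ⟨hφ.isSymmetricFormOnFunctor_hatOf, compatOf_hatOf hφ.1⟩,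
    fun _ hψ => ⟨hψ.isDualityCompat_compatOf, hatOf_compatOf hψ.1⟩⟩
end
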